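/- Let E and F be Banach lattices with projection bands B ⊆ E (with band projection P) and C ⊆ F (with band projection Q) such that B ⊗̂ C is a projection band in E ⊗̂ F with band projection S. Then S agrees with the lattice homomorphism P ⊗ Q determined by (P⊗Q)(x⊗y) = P(x) ⊗ Q(y) on E ⊗ F; in particular, for x ∈ E and y ∈ F, the band-component of x ⊗ y in B ⊗̂ C equals P(x) ⊗ Q(y). -/

import Mathlib

/-!
Split `x ⊗ y = Px ⊗ Qy + Px ⊗ (y - Qy) + (x - Px) ⊗ y`. The first term lies in `B ⊗̂ C = S(G)`,
so `S` fixes it. The other two are disjoint from every generator `Pe ⊗ Qf` of `B ⊗̂ C`: the tensor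
map preserves disjointness in each variable (by Fremlin's estimate `x₀ ⊗ y₀ ⊓ x₁ ⊗ y₁ ≤
(x₀ ⊓ x₁) ⊗ (y₀ ⊔ y₁)`), and `Pe ⊥ x - Px`, `Qf ⊥ y - Qy`. The elements disjoint from a fixed `g`
form a closed sublattice-submodule, so `g ⊥ S(G)`; since `|Sg| ≤ |g|`, this forces `Sg = 0`.
-/

open Filter Topology

/-- The sublattice-submodule of `G` generated by a set `s`. -/
def latticeSpan {G : Type*} [Lattice G] [AddCommGroup G] [Module ℝ G] (s : Set G) : Set G :=
  {x | ∀ p : Submodule ℝ G, s ⊆ p → (∀ a ∈ (p : Set G), ∀ b ∈ (p : Set G), a ⊔ b ∈ p) → x ∈ p}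

/-- `t` realizes the Banach lattice `G` as the Fremlin projective tensor
product `E ⊗̂ F`: a bilinear lattice bimorphism whose norm is the (cross)
Fremlin projective norm and whose image spans a dense subspace, satisfying
Fremlin's lattice estimate. -/
structure IsFremlinProjTensor (E F G : Type*)
    [NormedAddCommGroup E] [Lattice E] [HasSolidNorm E] [IsOrderedAddMonoid E] [NormedSpace ℝ E]
    [NormedAddCommGroup F] [Lattice F] [HasSolidNorm F] [IsOrderedAddMonoid F] [NormedSpace ℝ F]
    [NormedAddCommGroup G] [Lattice G] [HasSolidNorm G] [IsOrderedAddMonoid G] [NormedSpace ℝ G] [CompleteSpace G]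
    (t : E →ₗ[ℝ] F →ₗ[ℝ] G) : Prop where
  abs_tensor : ∀ x y, |t x y| = t |x| |y|
  pos_pos : ∀ x y, 0 < x → 0 < y → 0 < t x y
  inf_tensor_le : ∀ x₀ x₁ y₀ y₁, 0 ≤ x₀ → 0 ≤ x₁ → 0 ≤ y₀ → 0 ≤ y₁ →
    (t x₀ y₀ ⊓ t x₁ y₁) ≤ t (x₀ ⊓ x₁) (y₀ ⊔ y₁)
  cross_norm : ∀ x y, ‖t x y‖ = ‖x‖ * ‖y‖
  dense_span : Dense (Submodule.span ℝ (Set.image2 (fun x y => t x y) Set.univ Set.univ) : Set G)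

/-- `u` is a quasi-interior point of the Banach lattice `G`: `u ≥ 0` and for
every `x ≥ 0`, `x ⊓ n•u → x` in norm (equivalently, the ideal generated by `u`
is norm dense). -/
def QuasiInteriorPoint {G : Type*} [NormedAddCommGroup G] [Lattice G] [HasSolidNorm G] [IsOrderedAddMonoid G] (u : G) : Prop :=
  0 ≤ u ∧ ∀ x : G, 0 ≤ x → Tendsto (fun n : ℕ => x ⊓ n • u) atTop (nhds x)

/-- `P` is a band projection on the vector lattice `G`. -/
structure IsBandProjection {G : Type*} [Lattice G] [AddCommGroup G] [Module ℝ G]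
    (P : G →ₗ[ℝ] G) : Prop where
  idem : ∀ x, P (P x) = P x
  pos : ∀ x, 0 ≤ x → 0 ≤ P x
  proj_le : ∀ x, 0 ≤ x → P x ≤ x
  disj : ∀ x, |P x| ⊓ |x - P x| = 0

lemma nonneg_of_inf_eq_zero_left {α : Type*} [SemilatticeInf α] [Zero α] {a b : α}
    (h : a ⊓ b = 0) : 0 ≤ a :=
  h ▸ inf_le_left

lemma nonneg_of_inf_eq_zero_right {α : Type*} [SemilatticeInf α] [Zero α] {a b : α}
    (h : a ⊓ b = 0) : 0 ≤ b :=
  h ▸ inf_le_right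

lemma inf_eq_zero_of_le_of_le {α : Type*} [SemilatticeInf α] [Zero α] {a a' b b' : α}
    (ha : 0 ≤ a) (hb : 0 ≤ b) (haa' : a ≤ a') (hbb' : b ≤ b') (h : a' ⊓ b' = 0) : a ⊓ b = 0 :=
  le_antisymm ((inf_le_inf haa' hbb').trans_eq h) (le_inf ha hb)

section LatticeOrderedGroup

variable {α : Type*} [Lattice α] [AddCommGroup α] [IsOrderedAddMonoid α]

lemma add_inf_le_inf_add_inf {a b c : α} (ha : 0 ≤ a) (hb : 0 ≤ b) (hc : 0 ≤ c) :
    (a + b) ⊓ c ≤ a ⊓ c + b ⊓ c := by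
  rw [inf_add, add_inf, add_inf]
  refine le_inf (le_inf inf_le_left ?_) (le_inf ?_ ?_)
  · exact inf_le_right.trans (le_add_of_nonneg_left ha)
  · exact inf_le_right.trans (le_add_of_nonneg_right hb)
  · exact inf_le_right.trans (le_add_of_nonneg_left hc)

lemma le_of_le_add_of_inf_eq_zero {a b c : α} (hc : 0 ≤ c) (h : a ≤ b + c) (hab : a ⊓ b = 0) :
    a ≤ c :=
  calc a = (b + c) ⊓ a := (inf_eq_right.mpr h).symm
    _ ≤ b ⊓ a + c ⊓ a := add_inf_le_inf_add_inf (nonneg_of_inf_eq_zero_right hab) hc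
        (nonneg_of_inf_eq_zero_left hab)
    _ = c ⊓ a := by rw [inf_comm, hab, zero_add]
    _ ≤ c := inf_le_left

lemma nsmul_inf_eq_zero {a b : α} (h : a ⊓ b = 0) (n : ℕ) : (n • a) ⊓ b = 0 := by
  induction n with
  | zero => simpa using nonneg_of_inf_eq_zero_right h
  | succ n ih =>
    refine le_antisymm ?_ (le_inf (nsmul_nonneg (nonneg_of_inf_eq_zero_left h) _)
      (nonneg_of_inf_eq_zero_right h))
    calc ((n + 1) • a) ⊓ b = (n • a + a) ⊓ b := by rw [succ_nsmul]
      _ ≤ (n • a) ⊓ b + a ⊓ b := add_inf_le_inf_add_inf (nonneg_of_inf_eq_zero_left ih)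
          (nonneg_of_inf_eq_zero_left h) (nonneg_of_inf_eq_zero_right h)
      _ = 0 := by rw [ih, h, add_zero]

lemma nonneg_of_nsmul_nonneg {v : α} {n : ℕ} (hn : n ≠ 0) (h : 0 ≤ n • v) : 0 ≤ v := by
  have hdisj : v⁻ ⊓ n • v⁺ = 0 := by
    rw [inf_comm]
    exact nsmul_inf_eq_zero (posPart_inf_negPart_eq_zero v) n
  have hle : v⁻ ≤ n • v⁺ := by
    have : n • v⁻ ≤ n • v⁺ := by
      rwa [← sub_nonneg, ← nsmul_sub, posPart_sub_negPart]
    exact (le_self_nsmul (negPart_nonneg v) hn).trans this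
  rw [← negPart_eq_zero, ← hdisj, inf_eq_left.mpr hle]

end LatticeOrderedGroup

lemma abs_map_le_map_abs {F M N : Type*} [Lattice M] [AddCommGroup M] [IsOrderedAddMonoid M]
    [Lattice N] [AddCommGroup N] [IsOrderedAddMonoid N] [FunLike F M N] [AddMonoidHomClass F M N]
    {f : F} (hf : Monotone f) (x : M) : |f x| ≤ f |x| := by
  refine abs_le'.mpr ⟨hf (le_abs_self x), ?_⟩
  rw [← map_neg]
  exact hf (neg_le_abs x)

lemma LinearMap.map_inf_of_map_abs {𝕜 M N : Type*} [DivisionRing 𝕜] [NeZero (2 : 𝕜)]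
    [Lattice M] [AddCommGroup M] [IsOrderedAddMonoid M] [Module 𝕜 M]
    [Lattice N] [AddCommGroup N] [IsOrderedAddMonoid N] [Module 𝕜 N] {f : M →ₗ[𝕜] N}
    (hf : ∀ x, f |x| = |f x|) (a b : M) : f (a ⊓ b) = f a ⊓ f b := by
  rw [inf_eq_half_smul_add_sub_abs_sub' 𝕜, inf_eq_half_smul_add_sub_abs_sub' 𝕜 (f a),
    map_smul, map_sub, map_add, hf, map_sub]

namespace IsBandProjection

variable {E : Type*} [Lattice E] [AddCommGroup E] [Module ℝ E] {P : E →ₗ[ℝ] E}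

lemma apply_eq_self_of_mem_range (hP : IsBandProjection P) {x : E} (hx : x ∈ Set.range P) :
    P x = x := by
  obtain ⟨w, rfl⟩ := hx
  exact hP.idem w

variable [IsOrderedAddMonoid E]

lemma monotone (hP : IsBandProjection P) : Monotone P :=
  (monotone_iff_map_nonneg P).mpr hP.pos

lemma id_sub (hP : IsBandProjection P) : IsBandProjection (LinearMap.id - P) where
  idem x := by simp [hP.idem]
  pos x hx := by simpa using hP.proj_le x hx
  proj_le x hx := by simpa using hP.pos x hx
  disj x := by simpa [inf_comm] using hP.disj x

lemma abs_apply_le (hP : IsBandProjection P) (x : E) : |P x| ≤ |x| :=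
  (abs_map_le_map_abs hP.monotone x).trans (hP.proj_le _ (abs_nonneg x))

lemma abs_apply_inf_abs_sub_apply (hP : IsBandProjection P) (x y : E) :
    |P x| ⊓ |y - P y| = 0 := by
  set z := |x| + |y|
  have hz : 0 ≤ z := add_nonneg (abs_nonneg x) (abs_nonneg y)
  have hx : |P x| ≤ P z := (abs_map_le_map_abs hP.monotone x).trans
    (hP.monotone (le_add_of_nonneg_right (abs_nonneg y)))
  have hy : |y - P y| ≤ z - P z := by
    simpa [z] using (abs_map_le_map_abs hP.id_sub.monotone y).trans
      (hP.id_sub.monotone (le_add_of_nonneg_left (abs_nonneg x)))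
  have hzP : P z ⊓ (z - P z) = 0 := by
    simpa [abs_of_nonneg (hP.pos z hz), abs_of_nonneg (sub_nonneg.mpr (hP.proj_le z hz))]
      using hP.disj z
  exact inf_eq_zero_of_le_of_le (abs_nonneg _) (abs_nonneg _) hx hy hzP

end IsBandProjection

section NormedLattice

variable {G : Type*} [NormedAddCommGroup G] [Lattice G] [HasSolidNorm G] [IsOrderedAddMonoid G]
  [NormedSpace ℝ G]

-- `IsOrderedAddMonoid` says nothing about scalars: compatibility with `•` comes from the
-- divisibility of lattice-ordered groups and the closedness of the positive cone.
lemma smul_nonneg_of_hasSolidNorm {r : ℝ} (hr : 0 ≤ r) {w : G} (hw : 0 ≤ w) : 0 ≤ r • w := by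
  have hinv : ∀ n : ℕ, 0 ≤ (n : ℝ)⁻¹ • w := by
    intro n
    rcases eq_or_ne n 0 with rfl | hn
    · simp
    refine nonneg_of_nsmul_nonneg hn ?_
    rwa [← Nat.cast_smul_eq_nsmul ℝ, smul_inv_smul₀ (Nat.cast_ne_zero.mpr hn)]
  have hlim : Tendsto (fun n : ℕ => ((⌊r * n⌋₊ : ℝ) / n) • w) atTop (𝓝 (r • w)) :=
    ((tendsto_nat_floor_mul_div_atTop hr).comp tendsto_natCast_atTop_atTop).smul_const w
  refine ge_of_tendsto' hlim fun n => ?_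
  rw [div_eq_mul_inv, ← smul_smul, Nat.cast_smul_eq_nsmul]
  exact nsmul_nonneg (hinv n) _

instance HasSolidNorm.isOrderedModule : IsOrderedModule ℝ G :=
  .of_smul_nonneg fun _ hr _ hw => smul_nonneg_of_hasSolidNorm hr hw

lemma abs_smul_le (r : ℝ) (w : G) : |r • w| ≤ |r| • |w| := by
  have : |r • w| = |(|r|) • w| := by
    rcases abs_choice r with h | h <;> simp [h, neg_smul]
  rw [this]
  refine abs_le'.mpr ⟨smul_le_smul_of_nonneg_left (le_abs_self w) (abs_nonneg r), ?_⟩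
  rw [← smul_neg]
  exact smul_le_smul_of_nonneg_left (neg_le_abs w) (abs_nonneg r)

lemma smul_inf_eq_zero {r : ℝ} (hr : 0 ≤ r) {a b : G} (h : a ⊓ b = 0) : (r • a) ⊓ b = 0 := by
  have ha := nonneg_of_inf_eq_zero_left h
  have hle : r • a ≤ ⌈r⌉₊ • a := by
    rw [← Nat.cast_smul_eq_nsmul ℝ]
    exact smul_le_smul_of_nonneg_right (Nat.le_ceil r) ha
  exact inf_eq_zero_of_le_of_le (smul_nonneg hr ha) (nonneg_of_inf_eq_zero_right h) hle le_rfl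
    (nsmul_inf_eq_zero h ⌈r⌉₊)

end NormedLattice

lemma latticeSpan_subset {G : Type*} [Lattice G] [AddCommGroup G] [Module ℝ G] {s : Set G}
    {p : Submodule ℝ G} (hs : s ⊆ p) (hp : ∀ a ∈ p, ∀ b ∈ p, a ⊔ b ∈ p) :
    latticeSpan s ⊆ p :=
  fun _ hx => hx p hs hp

lemma subset_latticeSpan {G : Type*} [Lattice G] [AddCommGroup G] [Module ℝ G] (s : Set G) :
    s ⊆ latticeSpan s :=
  fun _ hx _ hs _ => hs hx

section DisjointComplement

variable {G : Type*} [NormedAddCommGroup G] [Lattice G] [HasSolidNorm G] [IsOrderedAddMonoid G]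
  [NormedSpace ℝ G]

def disjointComplement (g : G) : Submodule ℝ G where
  carrier := {w | |w| ⊓ |g| = 0}
  zero_mem' := by simp
  add_mem' {v w} hv hw := by
    have hsum : (|v| + |w|) ⊓ |g| = 0 := by
      refine le_antisymm ?_ (le_inf (add_nonneg (abs_nonneg v) (abs_nonneg w)) (abs_nonneg g))
      calc (|v| + |w|) ⊓ |g| ≤ |v| ⊓ |g| + |w| ⊓ |g| :=
            add_inf_le_inf_add_inf (abs_nonneg v) (abs_nonneg w) (abs_nonneg g)
        _ = 0 := by rw [hv.out, hw.out, add_zero]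
    exact inf_eq_zero_of_le_of_le (abs_nonneg _) (abs_nonneg g) (abs_add_le v w) le_rfl hsum
  smul_mem' r w hw := inf_eq_zero_of_le_of_le (abs_nonneg _) (abs_nonneg g) (abs_smul_le r w) le_rfl
    (smul_inf_eq_zero (abs_nonneg r) hw)

lemma mem_disjointComplement {g w : G} : w ∈ disjointComplement g ↔ |w| ⊓ |g| = 0 :=
  Iff.rfl

lemma abs_mem_disjointComplement {g w : G} (hw : w ∈ disjointComplement g) :
    |w| ∈ disjointComplement g := by
  rwa [mem_disjointComplement, abs_abs]

lemma sup_mem_disjointComplement {g a b : G} (ha : a ∈ disjointComplement g)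
    (hb : b ∈ disjointComplement g) : a ⊔ b ∈ disjointComplement g := by
  rw [sup_eq_half_smul_add_add_abs_sub' ℝ]
  exact Submodule.smul_mem _ _ (add_mem (add_mem ha hb)
    (abs_mem_disjointComplement (sub_mem hb ha)))

lemma isClosed_disjointComplement (g : G) : IsClosed (disjointComplement g : Set G) :=
  isClosed_eq ((continuous_id.sup continuous_neg).inf continuous_const) continuous_const

lemma closure_latticeSpan_subset_disjointComplement {s : Set G} {g : G}
    (hs : ∀ d ∈ s, |d| ⊓ |g| = 0) : closure (latticeSpan s) ⊆ disjointComplement g :=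
  closure_minimal (latticeSpan_subset hs fun _ ha _ hb => sup_mem_disjointComplement ha hb)
    (isClosed_disjointComplement g)

end DisjointComplement

namespace IsBandProjection

variable {G : Type*} [NormedAddCommGroup G] [Lattice G] [HasSolidNorm G] [IsOrderedAddMonoid G]
  [NormedSpace ℝ G] {S : G →ₗ[ℝ] G}

lemma apply_eq_zero_of_forall_abs_inf_eq_zero (hS : IsBandProjection S) {s : Set G}
    (hrange : Set.range S = closure (latticeSpan s)) {g : G} (hg : ∀ d ∈ s, |d| ⊓ |g| = 0) :
    S g = 0 := by
  have hmem : |S g| ⊓ |g| = 0 :=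
    closure_latticeSpan_subset_disjointComplement hg (hrange ▸ Set.mem_range_self g)
  have habs : |S g| = 0 := by rw [← hmem, inf_eq_left.mpr (hS.abs_apply_le g)]
  rw [← norm_eq_zero, ← norm_abs_eq_norm, habs, norm_zero]

end IsBandProjection

namespace IsFremlinProjTensor

variable {E F G : Type*}
  [NormedAddCommGroup E] [Lattice E] [HasSolidNorm E] [IsOrderedAddMonoid E] [NormedSpace ℝ E]
  [NormedAddCommGroup F] [Lattice F] [HasSolidNorm F] [IsOrderedAddMonoid F] [NormedSpace ℝ F]
  [NormedAddCommGroup G] [Lattice G] [HasSolidNorm G] [IsOrderedAddMonoid G] [NormedSpace ℝ G]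
  [CompleteSpace G] {t : E →ₗ[ℝ] F →ₗ[ℝ] G}

lemma nonneg (ht : IsFremlinProjTensor E F G t) {x : E} {y : F} (hx : 0 ≤ x) (hy : 0 ≤ y) :
    0 ≤ t x y := by
  have h := ht.abs_tensor x y
  rw [abs_of_nonneg hx, abs_of_nonneg hy] at h
  exact h ▸ abs_nonneg _

lemma monotone_flip (ht : IsFremlinProjTensor E F G t) {y : F} (hy : 0 ≤ y) :
    Monotone (t.flip y) :=
  (monotone_iff_map_nonneg _).mpr fun _ hx => ht.nonneg hx hy

lemma map_inf_right (ht : IsFremlinProjTensor E F G t) {x : E} (hx : 0 ≤ x) (a b : F) :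
    t x (a ⊓ b) = t x a ⊓ t x b :=
  LinearMap.map_inf_of_map_abs (fun y => by rw [ht.abs_tensor, abs_of_nonneg hx]) a b

lemma inf_eq_zero_of_inf_eq_zero_left (ht : IsFremlinProjTensor E F G t) {x₀ x₁ : E} {y₀ y₁ : F}
    (hy₀ : 0 ≤ y₀) (hy₁ : 0 ≤ y₁) (hx : x₀ ⊓ x₁ = 0) : t x₀ y₀ ⊓ t x₁ y₁ = 0 := by
  refine le_antisymm ?_ (le_inf (ht.nonneg (nonneg_of_inf_eq_zero_left hx) hy₀)
    (ht.nonneg (nonneg_of_inf_eq_zero_right hx) hy₁))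
  simpa [hx] using ht.inf_tensor_le x₀ x₁ y₀ y₁ (nonneg_of_inf_eq_zero_left hx)
    (nonneg_of_inf_eq_zero_right hx) hy₀ hy₁

lemma inf_eq_zero_of_inf_eq_zero_right (ht : IsFremlinProjTensor E F G t) {x₀ x₁ : E} {y₀ y₁ : F}
    (hx₀ : 0 ≤ x₀) (hx₁ : 0 ≤ x₁) (hy : y₀ ⊓ y₁ = 0) : t x₀ y₀ ⊓ t x₁ y₁ = 0 := by
  have hy₀ := nonneg_of_inf_eq_zero_left hy
  have hy₁ := nonneg_of_inf_eq_zero_right hy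
  set m := t x₀ y₀ ⊓ t x₁ y₁
  set c := x₀ ⊓ x₁
  have hc : 0 ≤ c := le_inf hx₀ hx₁
  have hm : 0 ≤ m := le_inf (ht.nonneg hx₀ hy₀) (ht.nonneg hx₁ hy₁)
  have hle_add : m ≤ t c y₀ + t c y₁ := by
    have hsup : y₀ ⊔ y₁ = y₀ + y₁ := by rw [← inf_add_sup y₀ y₁, hy, zero_add]
    simpa [hsup] using ht.inf_tensor_le x₀ x₁ y₀ y₁ hx₀ hx₁ hy₀ hy₁
  -- `m ≤ t x₁ y₁` and `t c y₀ ≤ t x₁ y₀`, and `t x₁` preserves the disjointness of `y₁`, `y₀`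
  have hdisj : m ⊓ t c y₀ = 0 := by
    refine inf_eq_zero_of_le_of_le hm (ht.nonneg hc hy₀) inf_le_right
      (ht.monotone_flip hy₀ inf_le_right) ?_
    rw [LinearMap.flip_apply, ← ht.map_inf_right hx₁, inf_comm, hy, map_zero]
  have hm_le : m ≤ t x₀ (y₀ ⊓ y₁) := by
    rw [ht.map_inf_right hx₀]
    exact le_inf inf_le_left ((le_of_le_add_of_inf_eq_zero (ht.nonneg hc hy₁) hle_add hdisj).trans
      (ht.monotone_flip hy₁ inf_le_left))
  exact le_antisymm (by simpa [hy] using hm_le) hm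

end IsFremlinProjTensor

theorem bandProjection_tensor_general
    {E F G : Type*}
    [NormedAddCommGroup E] [Lattice E] [HasSolidNorm E] [IsOrderedAddMonoid E] [NormedSpace ℝ E]
    [NormedAddCommGroup F] [Lattice F] [HasSolidNorm F] [IsOrderedAddMonoid F] [NormedSpace ℝ F]
    [NormedAddCommGroup G] [Lattice G] [HasSolidNorm G] [IsOrderedAddMonoid G] [NormedSpace ℝ G] [CompleteSpace G]
    (t : E →ₗ[ℝ] F →ₗ[ℝ] G) (ht : IsFremlinProjTensor E F G t)
    (P : E →ₗ[ℝ] E) (hP : IsBandProjection P)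
    (Q : F →ₗ[ℝ] F) (hQ : IsBandProjection Q)
    (S : G →ₗ[ℝ] G) (hS : IsBandProjection S)
    (hrange : Set.range S =
      closure (latticeSpan (Set.image2 (fun x y => t x y) (Set.range P) (Set.range Q)))) :
    ∀ (x : E) (y : F), S (t x y) = t (P x) (Q y) := by
  intro x y
  have hsplit : t x y = t (P x) (Q y) + t (P x) (y - Q y) + t (x - P x) y := by
    simp only [map_sub, LinearMap.sub_apply]
    abel
  have hfix : S (t (P x) (Q y)) = t (P x) (Q y) :=
    hS.apply_eq_self_of_mem_range <| hrange ▸ subset_closure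
      (subset_latticeSpan _ (Set.mem_image2_of_mem ⟨x, rfl⟩ ⟨y, rfl⟩))
  have hkill : ∀ g, (∀ e f, t |P e| |Q f| ⊓ |g| = 0) → S g = 0 := fun g hg =>
    hS.apply_eq_zero_of_forall_abs_inf_eq_zero hrange <| by
      rintro _ ⟨_, ⟨e, rfl⟩, _, ⟨f, rfl⟩, rfl⟩
      rw [ht.abs_tensor]
      exact hg e f
  have hright : S (t (P x) (y - Q y)) = 0 := hkill _ fun e f => by
    rw [ht.abs_tensor]
    exact ht.inf_eq_zero_of_inf_eq_zero_right (abs_nonneg _) (abs_nonneg _)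
      (hQ.abs_apply_inf_abs_sub_apply f y)
  have hleft : S (t (x - P x) y) = 0 := hkill _ fun e f => by
    rw [ht.abs_tensor]
    exact ht.inf_eq_zero_of_inf_eq_zero_left (abs_nonneg _) (abs_nonneg _)
      (hP.abs_apply_inf_abs_sub_apply e x)
  rw [hsplit, map_add, map_add, hfix, hright, hleft, add_zero, add_zero]

/-- if `B ⊆ E`, `C ⊆ F` are projection bands with band
projections `P`, `Q`, and `B ⊗̂ C` (the closed sublattice of `E ⊗̂ F` generated
by `B ⊗ C`) is a projection band in `E ⊗̂ F` with band projection `S`, then `S`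
agrees with `P ⊗ Q` on elementary tensors: the band-component of `x ⊗ y` in
`B ⊗̂ C` is `P(x) ⊗ Q(y)`. -/
theorem bandProjection_tensor
    {E F G : Type*}
    [NormedAddCommGroup E] [Lattice E] [HasSolidNorm E] [IsOrderedAddMonoid E] [NormedSpace ℝ E] [CompleteSpace E]
    [NormedAddCommGroup F] [Lattice F] [HasSolidNorm F] [IsOrderedAddMonoid F] [NormedSpace ℝ F] [CompleteSpace F]
    [NormedAddCommGroup G] [Lattice G] [HasSolidNorm G] [IsOrderedAddMonoid G] [NormedSpace ℝ G] [CompleteSpace G]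
    (t : E →ₗ[ℝ] F →ₗ[ℝ] G) (ht : IsFremlinProjTensor E F G t)
    (P : E →ₗ[ℝ] E) (hP : IsBandProjection P)
    (Q : F →ₗ[ℝ] F) (hQ : IsBandProjection Q)
    (S : G →ₗ[ℝ] G) (hS : IsBandProjection S)
    (hrange : Set.range S =
      closure (latticeSpan (Set.image2 (fun x y => t x y) (Set.range P) (Set.range Q)))) :
    ∀ (x : E) (y : F), S (t x y) = t (P x) (Q y) :=
  bandProjection_tensor_general t ht P hP Q hQ S hS hrange
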